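/- arXiv:1703.08208 — 9 statements merged into one kernel-verified Lean document; each statement's English description precedes it below -/
import Mathlib

section
/- Let n : ℕ, let α : Fin n → ℝ with α j ≠ 0 for every j, and let û : Fin n → ℝ with û j = 0 or û j = 1 for every j. Then Σ_{j} (if û j ≠ (1 − Real.sign (α j))/2 then |α j| else 0) = (1/2) · Σ_{j} (Real.sign (α j) · α j − (1 − 2 · û j) · α j). (This is the equivalence of the recursive hardware-friendly path-metric update of Eq. (7) with the closed form of Eq. (7.1).) -/
/-- Equivalence of the recursive hardware-friendly path-metric update (Eq. (7))
with the closed form (Eq. (7.1)) in LLR-based SCL decoding. -/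
theorem hwf_path_metric_closed_form (n : ℕ) (α : Fin n → ℝ) (hα : ∀ j, α j ≠ 0)
    (uhat : Fin n → ℝ) (huhat : ∀ j, uhat j = 0 ∨ uhat j = 1) :
    ∑ j, (if uhat j ≠ (1 - Real.sign (α j)) / 2 then |α j| else 0) =
      (1 / 2) * ∑ j, (Real.sign (α j) * α j - (1 - 2 * uhat j) * α j) := by
  rw [Finset.mul_sum]
  refine Finset.sum_congr rfl fun j _ => ?_
  rcases lt_or_gt_of_ne (hα j) with hj | hj
  · rw [Real.sign_of_neg hj, abs_of_neg hj]
    rcases huhat j with h | h <;> rw [h] <;> norm_num <;> ring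
  · rw [Real.sign_of_pos hj, abs_of_pos hj]
    rcases huhat j with h | h <;> rw [h] <;> norm_num <;> ring
end

section
/- Let n : ℕ, α : Fin n → ℝ, and let η : Fin n → ℝ be a sign vector (η i ∈ {−1, 1} for all i). Then Σ_i ln(1 + exp(−η i · α i)) = Σ_i ln(1 + exp(−|α i|)) + Σ_{i ∈ {i : η i · α i < 0}} |α i|. That is, the exact path metric of any candidate of a Rate-1 node equals the exact path metric of the hard-decision candidate plus the flip penalty of the candidate. -/
lemma log_one_add_exp_neg (x : ℝ) :
    Real.log (1 + Real.exp (-x)) =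
      Real.log (1 + Real.exp (-|x|)) + (if x < 0 then |x| else 0) := by
  rcases le_or_gt 0 x with h | h
  · rw [abs_of_nonneg h, if_neg (not_lt.mpr h), add_zero]
  · rw [abs_of_neg h, if_pos h]
    have h1 : (0:ℝ) < 1 + Real.exp x := by positivity
    have : Real.log (1 + Real.exp (-x)) = Real.log ((1 + Real.exp x) * Real.exp (-x)) := by
      rw [add_mul, one_mul, ← Real.exp_add, add_neg_cancel, Real.exp_zero, add_comm]
    rw [this, Real.log_mul (ne_of_gt h1) (Real.exp_ne_zero _), Real.log_exp, neg_neg]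

/-- The exact path metric of a Rate-1 node candidate equals the exact path metric
of the hard-decision candidate plus the candidate's flip penalty. -/
theorem rate1_exact_pm_eq_hard_decision_add_flip_penalty (n : ℕ) (α : Fin n → ℝ)
    (η : Fin n → ℝ) (hη : ∀ i, η i = -1 ∨ η i = 1) :
    ∑ i, Real.log (1 + Real.exp (-(η i * α i))) =
      ∑ i, Real.log (1 + Real.exp (-|α i|)) +
        ∑ i ∈ Finset.univ.filter (fun i => η i * α i < 0), |α i| := by
  have habs : ∀ i, |η i * α i| = |α i| := by
    intro i
    rw [abs_mul]
    rcases hη i with h | h <;> simp [h]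
  calc ∑ i, Real.log (1 + Real.exp (-(η i * α i)))
      = ∑ i, (Real.log (1 + Real.exp (-|α i|)) + (if η i * α i < 0 then |α i| else 0)) := by
        refine Finset.sum_congr rfl fun i _ => ?_
        rw [log_one_add_exp_neg, habs]
    _ = ∑ i, Real.log (1 + Real.exp (-|α i|)) +
          ∑ i ∈ Finset.univ.filter (fun i => η i * α i < 0), |α i| := by
        rw [Finset.sum_add_distrib, Finset.sum_ite, Finset.sum_const, smul_zero, add_zero]
end

section
/- Let n : ℕ, α : Fin n → ℝ, and let η, μ : Fin n → ℝ be sign vectors (values in {−1, 1}). Then Σ_i ln(1 + exp(−η i · α i)) ≤ Σ_i ln(1 + exp(−μ i · α i)) if and only if Σ_{i : η i · α i < 0} |α i| ≤ Σ_{i : μ i · α i < 0} |α i|. That is, ordering Rate-1 candidates by the exact path metric coincides with ordering them by their flip penalties. -/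
lemma log_one_add_exp_neg_decomp (x : ℝ) :
    Real.log (1 + Real.exp (-x)) = Real.log (1 + Real.exp (-|x|)) + max (-x) 0 := by
  rcases le_or_gt 0 x with h | h
  · rw [abs_of_nonneg h, max_eq_right (by linarith)]; ring
  · rw [abs_of_neg h, neg_neg, max_eq_left (by linarith)]
    have h1 : (1 : ℝ) + Real.exp (-x) = Real.exp (-x) * (1 + Real.exp x) := by
      rw [mul_add, mul_one, ← Real.exp_add, neg_add_cancel, Real.exp_zero]; ring
    rw [h1, Real.log_mul (Real.exp_ne_zero _) (by positivity), Real.log_exp]; ring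

lemma sum_decomp (n : ℕ) (α η : Fin n → ℝ) (hη : ∀ i, η i = -1 ∨ η i = 1) :
    ∑ i, Real.log (1 + Real.exp (-(η i * α i))) =
      (∑ i, Real.log (1 + Real.exp (-|α i|))) +
      ∑ i ∈ Finset.univ.filter (fun i => η i * α i < 0), |α i| := by
  have habs : ∀ i, |η i * α i| = |α i| := by
    intro i; rw [abs_mul]; rcases hη i with h | h <;> simp [h]
  rw [Finset.sum_filter, ← Finset.sum_add_distrib]
  refine Finset.sum_congr rfl fun i _ => ?_
  rw [log_one_add_exp_neg_decomp (η i * α i), habs i]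
  congr 1
  rcases lt_or_ge (η i * α i) 0 with h | h
  · rw [if_pos h, max_eq_left (by linarith), ← habs i, abs_of_neg h]
  · rw [if_neg (not_lt.mpr h), max_eq_right (by linarith)]

/-- Ordering Rate-1 node candidates by the exact path metric coincides with
ordering them by their flip penalties. -/
theorem rate1_exact_pm_order_iff_flip_penalty_order (n : ℕ) (α : Fin n → ℝ)
    (η μ : Fin n → ℝ) (hη : ∀ i, η i = -1 ∨ η i = 1) (hμ : ∀ i, μ i = -1 ∨ μ i = 1) :
    (∑ i, Real.log (1 + Real.exp (-(η i * α i))) ≤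
        ∑ i, Real.log (1 + Real.exp (-(μ i * α i)))) ↔
      (∑ i ∈ Finset.univ.filter (fun i => η i * α i < 0), |α i| ≤
        ∑ i ∈ Finset.univ.filter (fun i => μ i * α i < 0), |α i|) := by
  rw [sum_decomp n α η hη, sum_decomp n α μ hμ, add_le_add_iff_left]
end

section
/- Let n : ℕ, let w : Fin n → ℝ with 0 ≤ w i for all i, let L ≥ 1 with L − 1 ≤ n, and let R : Finset (Fin n) with R.card = L − 1 be such that w r ≤ w j for every r ∈ R and every j ∉ R. Then the family 𝒯 consisting of the empty flip set together with the singletons {r} for r ∈ R contains exactly L pairwise distinct flip sets, each a subset of R, and for every flip set S with ¬(S ⊆ R) and every T ∈ 𝒯, Σ_{i ∈ T} w i ≤ Σ_{i ∈ S} w i. Hence any candidate that flips a position outside the L − 1 smallest-weight positions is dominated by at least L candidates flipping only positions in R, and can never be strictly among the L surviving paths. (Combinatorial core of Theorem 1: in list decoding with list size L, min(L − 1, n) path forks suffice to decode a Rate-1 node of length n exactly as conventional SSCL.) -/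
/-- Combinatorial core of Theorem 1: with list size `L`, the empty flip set
together with the `L − 1` singleton flip sets of smallest weight form `L`
distinct flip sets, all contained in `R`, each of whose penalties is at most
the penalty of any flip set that is not contained in `R`. Hence
`min (L − 1, n)` path forks suffice to decode a Rate-1 node of length `n`
exactly as conventional SSCL. -/
theorem rate1_list_decoding_flip_set_domination (n : ℕ) (w : Fin n → ℝ)
    (hw : ∀ i, 0 ≤ w i) (L : ℕ) (hL : 1 ≤ L) (hLn : L - 1 ≤ n)
    (R : Finset (Fin n)) (hcard : R.card = L - 1)
    (hmin : ∀ r ∈ R, ∀ j ∉ R, w r ≤ w j) :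
    (insert (∅ : Finset (Fin n)) (R.image fun r => ({r} : Finset (Fin n)))).card = L ∧
      (∀ T ∈ insert (∅ : Finset (Fin n)) (R.image fun r => ({r} : Finset (Fin n))), T ⊆ R) ∧
      (∀ S : Finset (Fin n), ¬S ⊆ R →
        ∀ T ∈ insert (∅ : Finset (Fin n)) (R.image fun r => ({r} : Finset (Fin n))),
          ∑ i ∈ T, w i ≤ ∑ i ∈ S, w i) := by
  refine ⟨?_, ?_, ?_⟩
  · rw [Finset.card_insert_of_notMem, Finset.card_image_of_injective,
      hcard, Nat.sub_add_cancel hL]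
    · intro a b hab
      simpa using hab
    · simp only [Finset.mem_image]
      rintro ⟨r, -, hr⟩
      exact (Finset.singleton_ne_empty r) hr
  · intro T hT
    rcases Finset.mem_insert.mp hT with h | h
    · simp [h]
    · obtain ⟨r, hr, rfl⟩ := Finset.mem_image.mp h
      simpa using hr
  · intro S hS T hT
    obtain ⟨j, hjS, hjR⟩ := Finset.not_subset.mp hS
    have hwj : w j ≤ ∑ i ∈ S, w i :=
      Finset.single_le_sum (fun i _ => hw i) hjS
    rcases Finset.mem_insert.mp hT with h | h
    · simp only [h, Finset.sum_empty]
      exact Finset.sum_nonneg fun i _ => hw i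
    · obtain ⟨r, hr, rfl⟩ := Finset.mem_image.mp h
      simpa using le_trans (hmin r hr j hjR) hwj
end

section
/- Let n : ℕ, let α : Fin n → ℝ with α i ≠ 0 for all i, let L ≥ 1 with L − 1 ≤ n, and let R : Finset (Fin n) with R.card = L − 1 be such that |α r| ≤ |α j| for every r ∈ R and every j ∉ R. Then for every sign vector η (values in {−1,1}) for which there exists i ∉ R with η i · α i < 0, there exist L pairwise distinct sign vectors μ, each satisfying μ j · α j > 0 for all j ∉ R and each distinct from η, such that Σ_i ln(1 + exp(−μ i · α i)) ≤ Σ_i ln(1 + exp(−η i · α i)). (Exact-path-metric form of Theorem 1: a Rate-1 node candidate that disagrees with the hard decision outside the L − 1 least reliable positions is dominated by L candidates that disagree only inside those positions.) -/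
noncomputable def pmF (x : ℝ) : ℝ := Real.log (1 + Real.exp (-x))

lemma pmF_neg (t : ℝ) : pmF (-t) = pmF t + t := by
  unfold pmF
  have h : 1 + Real.exp t = Real.exp t * (1 + Real.exp (-t)) := by
    rw [mul_add, mul_one, ← Real.exp_add, add_neg_cancel, Real.exp_zero]; ring
  rw [neg_neg, h, Real.log_mul (Real.exp_ne_zero t) (by positivity), Real.log_exp]
  ring

lemma pmF_point (e x : ℝ) (he : e = -1 ∨ e = 1) (hx : x ≠ 0) :
    pmF (e * x) = pmF |x| + (if e * x < 0 then |x| else 0) := by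
  have habs : |e * x| = |x| := by
    rcases he with h | h <;> simp [h, abs_mul]
  have hne : e * x ≠ 0 := by
    rcases he with h | h <;> simp [h, hx]
  rcases lt_or_gt_of_ne hne with h | h
  · have : e * x = -|x| := by rw [← habs, abs_of_neg h, neg_neg]
    rw [this, pmF_neg, if_pos (neg_lt_zero.2 (abs_pos.2 hx))]
  · have : e * x = |x| := by rw [← habs, abs_of_pos h]
    rw [this, if_neg (not_lt.2 (abs_nonneg x))]
    ring

lemma pm_decomp (n : ℕ) (α : Fin n → ℝ) (hα : ∀ i, α i ≠ 0) (μ : Fin n → ℝ)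
    (hμ : ∀ i, μ i = -1 ∨ μ i = 1) :
    ∑ i, pmF (μ i * α i) = ∑ i, pmF |α i| + ∑ i, (if μ i * α i < 0 then |α i| else 0) := by
  rw [← Finset.sum_add_distrib]
  exact Finset.sum_congr rfl fun i _ => pmF_point _ _ (hμ i) (hα i)

/-- Exact-path-metric form of Theorem 1: a Rate-1 node candidate that disagrees
with the hard decision outside the `L − 1` least reliable positions is dominated
by `L` pairwise distinct candidates that disagree only inside those positions. -/
theorem rate1_candidate_dominated_by_L_candidates (n : ℕ) (α : Fin n → ℝ)
    (hα : ∀ i, α i ≠ 0) (L : ℕ) (hL : 1 ≤ L) (hLn : L - 1 ≤ n)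
    (R : Finset (Fin n)) (hcard : R.card = L - 1)
    (hmin : ∀ r ∈ R, ∀ j ∉ R, |α r| ≤ |α j|)
    (η : Fin n → ℝ) (hη : ∀ i, η i = -1 ∨ η i = 1)
    (hout : ∃ i, i ∉ R ∧ η i * α i < 0) :
    ∃ M : Finset (Fin n → ℝ), M.card = L ∧
      ∀ μ ∈ M, (∀ i, μ i = -1 ∨ μ i = 1) ∧ (∀ j ∉ R, 0 < μ j * α j) ∧ μ ≠ η ∧
        ∑ i, Real.log (1 + Real.exp (-(μ i * α i))) ≤
          ∑ i, Real.log (1 + Real.exp (-(η i * α i))) := by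
  classical
  obtain ⟨i₀, hi₀R, hi₀⟩ := hout
  set hd : Fin n → ℝ := fun i => if 0 < α i then 1 else -1 with hhd
  have hd_sign : ∀ i, hd i = -1 ∨ hd i = 1 := by
    intro i; by_cases h : 0 < α i <;> simp [hhd, h]
  have hd_pos : ∀ i, 0 < hd i * α i := by
    intro i
    rcases lt_or_gt_of_ne (hα i) with h | h
    · simp [hhd, not_lt.2 h.le, h, mul_pos_of_neg_of_neg]
    · simp [hhd, h]
  set μr : Fin n → (Fin n → ℝ) := fun r i => if i = r then -hd i else hd i with hμr
  have hdne : ∀ i, -hd i ≠ hd i := by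
    intro i
    rcases hd_sign i with h | h <;> rw [h] <;> norm_num
  have hμrne : ∀ r, μr r ≠ hd := by
    intro r h
    have := congrFun h r
    simp only [hμr, if_pos rfl] at this
    exact hdne r this
  have hinj : Set.InjOn μr R := by
    intro a _ b _ hab
    by_contra hne
    have := congrFun hab a
    simp only [hμr, if_pos rfl, if_neg hne] at this
    exact hdne a this
  refine ⟨insert hd (R.image μr), ?_, ?_⟩
  · rw [Finset.card_insert_of_notMem, Finset.card_image_of_injOn hinj, hcard]
    · omega
    · intro h
      obtain ⟨r, _, hr⟩ := Finset.mem_image.1 h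
      exact hμrne r hr
  · -- sum decomposition for η
    have hηdec := pm_decomp n α hα η hη
    have hηsum : |α i₀| ≤ ∑ i, (if η i * α i < 0 then |α i| else 0) := by
      have : (if η i₀ * α i₀ < 0 then |α i₀| else 0) = |α i₀| := if_pos hi₀
      rw [← this]
      exact Finset.single_le_sum (f := fun i => if η i * α i < 0 then |α i| else 0) (fun i _ => by positivity) (Finset.mem_univ i₀)
    have hηnonneg : (0:ℝ) ≤ ∑ i, (if η i * α i < 0 then |α i| else 0) :=
      le_trans (abs_nonneg _) hηsum
    intro μ hμ
    rcases Finset.mem_insert.1 hμ with h | h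
    · subst h
      refine ⟨hd_sign, fun j _ => hd_pos j, ?_, ?_⟩
      · intro h
        rw [h] at hd_pos
        exact absurd (hd_pos i₀) (not_lt.2 hi₀.le)
      · show ∑ i, pmF (hd i * α i) ≤ ∑ i, pmF (η i * α i)
        rw [pm_decomp n α hα hd hd_sign, hηdec]
        have : ∑ i, (if hd i * α i < 0 then |α i| else 0) = 0 :=
          Finset.sum_eq_zero fun i _ => if_neg (not_lt.2 (hd_pos i).le)
        rw [this]
        linarith
    · obtain ⟨r, hrR, hr⟩ := Finset.mem_image.1 h
      subst hr
      have hsign : ∀ i, μr r i = -1 ∨ μr r i = 1 := by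
        intro i
        simp only [hμr]
        split
        · rcases hd_sign i with h | h <;> simp [h]
        · exact hd_sign i
      have hposout : ∀ j ∉ R, 0 < μr r j * α j := by
        intro j hj
        have hjr : j ≠ r := fun h => hj (h ▸ hrR)
        simp only [hμr, if_neg hjr]
        exact hd_pos j
      refine ⟨hsign, hposout, ?_, ?_⟩
      · intro h
        have := hposout i₀ hi₀R
        rw [h] at this
        exact absurd this (not_lt.2 hi₀.le)
      · show ∑ i, pmF (μr r i * α i) ≤ ∑ i, pmF (η i * α i)
        rw [pm_decomp n α hα (μr r) hsign, hηdec]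
        have hrneg : μr r r * α r < 0 := by
          simp only [hμr, if_pos rfl, neg_mul]
          exact neg_lt_zero.2 (hd_pos r)
        have hsum : ∑ i, (if μr r i * α i < 0 then |α i| else 0) = |α r| := by
          rw [Finset.sum_eq_single_of_mem r (Finset.mem_univ r)]
          · exact if_pos hrneg
          · intro i _ hir
            refine if_neg (not_lt.2 ?_)
            simp only [hμr, if_neg hir]
            exact (hd_pos i).le
        rw [hsum]
        have := hmin r hrR i₀ hi₀R
        linarith
end

section
/- Let n : ℕ, let α : Fin n → ℝ, let i₀ : Fin n satisfy |α i₀| ≤ |α j| for all j, let g ∈ {0, 1}, and let L ≥ 1 with L ≤ n. Let R : Finset (Fin n) with i₀ ∉ R, R.card = L − 1, and |α r| ≤ |α j| for every r ∈ R and every j with j ∉ R and j ≠ i₀. For a flip set S : Finset (Fin n) with i₀ ∉ S, define the SSCL-SPC path metric PM(S) = g·|α i₀| + Σ_{i ∈ S} (|α i| + (1 − 2g)·|α i₀|). Then the family 𝒯 consisting of the empty flip set together with the singletons {r} for r ∈ R contains exactly L pairwise distinct flip sets, each a subset of R, and for every flip set S with i₀ ∉ S and ¬(S ⊆ R) and every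 T ∈ 𝒯, PM(T) ≤ PM(S). (Combinatorial core of Theorem 2: in SSCL-SPC decoding with list size L, min(L, n) path forks — one for the parity/least-reliable bit plus L − 1 for the remaining bits — suffice to decode an SPC node of length n exactly as conventional SSCL-SPC.) -/
/-- Combinatorial core of Theorem 2: in SSCL-SPC decoding with list size `L`,
the empty flip set together with the `L − 1` singleton flip sets over the
least reliable non-parity positions form `L` distinct flip sets, all contained
in `R`, each of whose SSCL-SPC path metrics is at most the path metric of any
flip set (avoiding the least reliable position `i₀`) not contained in `R`.
Hence `min (L, n)` path forks suffice to decode an SPC node of length `n`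
exactly as conventional SSCL-SPC. -/
theorem spc_list_decoding_flip_set_domination (n : ℕ) (α : Fin n → ℝ)
    (i₀ : Fin n) (h₀ : ∀ j, |α i₀| ≤ |α j|) (g : ℝ) (hg : g = 0 ∨ g = 1)
    (L : ℕ) (hL : 1 ≤ L) (hLn : L ≤ n)
    (R : Finset (Fin n)) (hi₀R : i₀ ∉ R) (hcard : R.card = L - 1)
    (hmin : ∀ r ∈ R, ∀ j, j ∉ R → j ≠ i₀ → |α r| ≤ |α j|) :
    (insert (∅ : Finset (Fin n)) (R.image fun r => ({r} : Finset (Fin n)))).card = L ∧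
      (∀ T ∈ insert (∅ : Finset (Fin n)) (R.image fun r => ({r} : Finset (Fin n))),
        T ⊆ R) ∧
      (∀ S : Finset (Fin n), i₀ ∉ S → ¬S ⊆ R →
        ∀ T ∈ insert (∅ : Finset (Fin n)) (R.image fun r => ({r} : Finset (Fin n))),
          g * |α i₀| + ∑ i ∈ T, (|α i| + (1 - 2 * g) * |α i₀|) ≤
            g * |α i₀| + ∑ i ∈ S, (|α i| + (1 - 2 * g) * |α i₀|)) := by
  have hterm : ∀ i : Fin n, 0 ≤ |α i| + (1 - 2 * g) * |α i₀| := by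
    intro i
    rcases hg with h | h <;> subst h
    · have := abs_nonneg (α i); have := abs_nonneg (α i₀); nlinarith
    · have := h₀ i; nlinarith
  refine ⟨?_, ?_, ?_⟩
  · rw [Finset.card_insert_of_notMem, Finset.card_image_of_injective _
      (fun a b h => Finset.singleton_injective h), hcard]
    · omega
    · simp only [Finset.mem_image, not_exists]
      intro r h
      exact (Finset.singleton_ne_empty r) h.2
  · intro T hT
    rcases Finset.mem_insert.mp hT with h | h
    · simp [h]
    · obtain ⟨r, hr, rfl⟩ := Finset.mem_image.mp h
      simpa using hr
  · intro S hi₀S hSR T hT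
    obtain ⟨s, hsS, hsR⟩ := Finset.not_subset.mp hSR
    have hsi₀ : s ≠ i₀ := fun h => hi₀S (h ▸ hsS)
    have hsum : |α s| + (1 - 2 * g) * |α i₀| ≤
        ∑ i ∈ S, (|α i| + (1 - 2 * g) * |α i₀|) :=
      Finset.single_le_sum (fun i _ => hterm i) hsS
    rcases Finset.mem_insert.mp hT with h | h
    · subst h
      simp only [Finset.sum_empty, add_zero]
      have : 0 ≤ ∑ i ∈ S, (|α i| + (1 - 2 * g) * |α i₀|) :=
        Finset.sum_nonneg fun i _ => hterm i
      linarith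
    · obtain ⟨r, hr, rfl⟩ := Finset.mem_image.mp h
      have hle : |α r| ≤ |α s| := hmin r hr s hsR hsi₀
      simp only [Finset.sum_singleton]
      linarith
end

section
/- Let n : ℕ, let α : Fin n → ℝ with α i ≠ 0 for all i, let i₀ : Fin n satisfy |α i₀| ≤ |α j| for all j, and let p ∈ {−1, 1}. (a) If ∏_i Real.sign (α i) ≠ p, then every sign vector η (values in {−1,1}) with ∏_i η i = p has flip penalty Σ_{i : η i · α i < 0} |α i| ≥ |α i₀|, and the sign vector that agrees in sign with α at every position except i₀ has product p and flip penalty exactly |α i₀|. (b) If ∏_i Real.sign (α i) = p, then the sign vector agreeing in sign with α everywhere has product p and flip penalty 0, and every sign vector has nonnegative flip penalty. Hence the minimum flip penalty among parity-p candidates is 0 if the hard decision satisfies the parity and |α i₀| otherwise. -/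
lemma sign_mul_self_pos {x : ℝ} (hx : x ≠ 0) : 0 < Real.sign x * x := by
  rcases hx.lt_or_gt with h | h
  · rw [Real.sign_of_neg h]; nlinarith
  · rw [Real.sign_of_pos h]; nlinarith

lemma sign_pm {x : ℝ} (hx : x ≠ 0) : Real.sign x = -1 ∨ Real.sign x = 1 := by
  rcases hx.lt_or_gt with h | h
  · exact Or.inl (Real.sign_of_neg h)
  · exact Or.inr (Real.sign_of_pos h)

/-- The minimum flip penalty among parity-`p` candidates of an SPC node is `0`
if the hard decision satisfies the parity and `|α i₀|` otherwise, where `i₀` is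
the least reliable position. This justifies the path-metric initialization
`PM₀ = γ·|α_{i_min}|` of Eq. (21). -/
theorem spc_min_flip_penalty (n : ℕ) (α : Fin n → ℝ) (hα : ∀ i, α i ≠ 0)
    (i₀ : Fin n) (h₀ : ∀ j, |α i₀| ≤ |α j|) (p : ℝ) (hp : p = -1 ∨ p = 1) :
    ((∏ i, Real.sign (α i)) ≠ p →
      (∀ η : Fin n → ℝ, (∀ i, η i = -1 ∨ η i = 1) → (∏ i, η i) = p →
        |α i₀| ≤ ∑ i ∈ Finset.univ.filter (fun i => η i * α i < 0), |α i|) ∧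
      (∏ i, (if i = i₀ then -Real.sign (α i) else Real.sign (α i))) = p ∧
      ∑ i ∈ Finset.univ.filter
          (fun i => (if i = i₀ then -Real.sign (α i) else Real.sign (α i)) * α i < 0),
        |α i| = |α i₀|) ∧
    ((∏ i, Real.sign (α i)) = p →
      (∏ i, Real.sign (α i)) = p ∧
      (∑ i ∈ Finset.univ.filter (fun i => Real.sign (α i) * α i < 0), |α i| = 0) ∧
      ∀ η : Fin n → ℝ,
        0 ≤ ∑ i ∈ Finset.univ.filter (fun i => η i * α i < 0), |α i|) := by
  have hprod : (∏ i, Real.sign (α i)) = -1 ∨ (∏ i, Real.sign (α i)) = 1 := by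
    induction' (Finset.univ : Finset (Fin n)) using Finset.induction_on with a s ha ih
    · exact Or.inr (by simp)
    · rw [Finset.prod_insert ha]
      rcases ih with h | h <;> rcases sign_pm (hα a) with h' | h' <;>
        rw [h, h'] <;> norm_num
  refine ⟨fun hne => ?_, fun heq => ⟨heq, ?_, fun η => Finset.sum_nonneg
    fun i _ => abs_nonneg _⟩⟩
  · refine ⟨fun η hη hηp => ?_, ?_, ?_⟩
    · by_cases hall : ∀ i, η i = Real.sign (α i)
      · exact absurd (hηp ▸ Finset.prod_congr rfl fun i _ => (hall i).symm) hne
      · push_neg at hall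
        obtain ⟨j, hj⟩ := hall
        have hjneg : η j * α j < 0 := by
          have hpos := sign_mul_self_pos (hα j)
          rcases hη j with h | h <;> rcases sign_pm (hα j) with h' | h'
          · exact absurd h' (h ▸ hj).symm
          · rw [h'] at hpos; rw [h]; linarith
          · rw [h'] at hpos; rw [h]; linarith
          · exact absurd h' (h ▸ hj).symm
        calc |α i₀| ≤ |α j| := h₀ j
          _ ≤ _ := Finset.single_le_sum (f := fun i => |α i|)
              (fun i _ => abs_nonneg _) (by simp [hjneg])
    · have key : (∏ i, (if i = i₀ then -Real.sign (α i) else Real.sign (α i)))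
          = -∏ i, Real.sign (α i) := by
        rw [← Finset.prod_erase_mul _ _ (Finset.mem_univ i₀),
            ← Finset.prod_erase_mul _ (fun i => Real.sign (α i)) (Finset.mem_univ i₀)]
        rw [Finset.prod_congr rfl (fun i hi => if_neg (Finset.ne_of_mem_erase hi)),
            if_pos rfl]
        ring
      rw [key]
      rcases hprod with h | h <;> rcases hp with h' | h' <;>
        simp_all
    · have hfilt : Finset.univ.filter
          (fun i => (if i = i₀ then -Real.sign (α i) else Real.sign (α i)) * α i < 0)
          = {i₀} := by
        ext i
        simp only [Finset.mem_filter, Finset.mem_univ, true_and, Finset.mem_singleton]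
        constructor
        · intro h
          by_contra hne'
          rw [if_neg hne'] at h
          exact absurd h (not_lt.2 (sign_mul_self_pos (hα i)).le)
        · rintro rfl
          rw [if_pos rfl]
          have := sign_mul_self_pos (hα i); linarith
      rw [hfilt, Finset.sum_singleton]
  · have : Finset.univ.filter (fun i => Real.sign (α i) * α i < 0) = ∅ := by
      ext i
      simp only [Finset.mem_filter, Finset.mem_univ, true_and, Finset.notMem_empty,
        iff_false]
      exact not_lt.2 (sign_mul_self_pos (hα i)).le
    rw [this, Finset.sum_empty]
end

section
/- Let n : ℕ, let α : Fin n → ℝ, let L ≥ 1 with L ≤ n, and let R : Finset (Fin n) with R.card = L be such that |α r| ≤ |α j| for every r ∈ R and every j ∉ R. Then for every flip set S : Finset (Fin n) of odd cardinality with ¬(S ⊆ R), the L singleton flip sets {r} for r ∈ R all have odd cardinality, are pairwise distinct and distinct from S, and each satisfies Σ_{i ∈ {r}} |α i| ≤ Σ_{i ∈ S} |α i|. (Odd-parity case of the combinatorial content of Theorem 2: an odd-parity SPC candidate flipping a position outside the L least reliable positions is dominated by L odd-parity candidates flipping only within them.) -/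
/-- Odd-parity case of the combinatorial content of Theorem 2: an odd-parity
SPC candidate flipping a position outside the `L` least reliable positions is
dominated by the `L` pairwise distinct odd-cardinality singleton flip sets over
the least reliable positions. -/
theorem spc_odd_parity_flip_set_domination (n : ℕ) (α : Fin n → ℝ)
    (L : ℕ) (hL : 1 ≤ L) (hLn : L ≤ n)
    (R : Finset (Fin n)) (hcard : R.card = L)
    (hmin : ∀ r ∈ R, ∀ j ∉ R, |α r| ≤ |α j|) :
    ∀ S : Finset (Fin n), Odd S.card → ¬S ⊆ R →
      (R.image fun r => ({r} : Finset (Fin n))).card = L ∧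
      ∀ T ∈ R.image fun r => ({r} : Finset (Fin n)),
        Odd T.card ∧ T ≠ S ∧ ∑ i ∈ T, |α i| ≤ ∑ i ∈ S, |α i| := by
  intro S hSodd hSR
  obtain ⟨j, hjS, hjR⟩ : ∃ j, j ∈ S ∧ j ∉ R := by
    by_contra h
    push_neg at h
    exact hSR fun x hx => h x hx
  constructor
  · rw [Finset.card_image_of_injective _ (fun a b h => Finset.singleton_injective h), hcard]
  · intro T hT
    obtain ⟨r, hrR, rfl⟩ := Finset.mem_image.mp hT
    refine ⟨by simp, ?_, ?_⟩
    · rintro rfl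
      exact hSR (by simpa using hrR)
    · rw [Finset.sum_singleton]
      calc |α r| ≤ |α j| := hmin r hrR j hjR
        _ ≤ ∑ i ∈ S, |α i| :=
          Finset.single_le_sum (fun i _ => abs_nonneg (α i)) hjS
end

section
/- Let n : ℕ, let α : Fin n → ℝ, let L ≥ 1 with L ≤ n, and let R : Finset (Fin n) with R.card = L and i₀ ∈ R be such that |α i₀| ≤ |α j| for all j and |α r| ≤ |α j| for every r ∈ R and every j ∉ R. Then for every flip set S : Finset (Fin n) of even cardinality with ¬(S ⊆ R), the L flip sets consisting of the empty set together with the pairs {i₀, r} for r ∈ R with r ≠ i₀ all have even cardinality, are pairwise distinct and distinct from S, and each has penalty Σ |α i| over its elements at most Σ_{i ∈ S} |α i|. (Even-parity case of the combinatorial content of Theorem 2: an even-parity SPC candidate flipping a position outside the L least reliable positions is dominated by L even-parity candidates flipping only within them.) -/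
/-- Even-parity case of the combinatorial content of Theorem 2: an even-parity
SPC candidate flipping a position outside the `L` least reliable positions is
dominated by the `L` pairwise distinct even-cardinality flip sets consisting of
the empty set together with the pairs `{i₀, r}` for `r ∈ R`, `r ≠ i₀`, where
`i₀` is the least reliable position. -/
theorem spc_even_parity_flip_set_domination (n : ℕ) (α : Fin n → ℝ)
    (L : ℕ) (hL : 1 ≤ L) (hLn : L ≤ n)
    (R : Finset (Fin n)) (hcard : R.card = L) (i₀ : Fin n) (hi₀R : i₀ ∈ R)
    (h₀ : ∀ j, |α i₀| ≤ |α j|)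
    (hmin : ∀ r ∈ R, ∀ j ∉ R, |α r| ≤ |α j|) :
    ∀ S : Finset (Fin n), Even S.card → ¬S ⊆ R →
      (insert (∅ : Finset (Fin n))
          ((R.erase i₀).image fun r => ({i₀, r} : Finset (Fin n)))).card = L ∧
      ∀ T ∈ insert (∅ : Finset (Fin n))
          ((R.erase i₀).image fun r => ({i₀, r} : Finset (Fin n))),
        Even T.card ∧ T ≠ S ∧ ∑ i ∈ T, |α i| ≤ ∑ i ∈ S, |α i| := by
  intro S hSeven hSR
  obtain ⟨j, hjS, hjR⟩ := Finset.not_subset.mp hSR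
  -- S has at least 2 elements
  have hS1 : 1 ≤ S.card := Finset.card_pos.mpr ⟨j, hjS⟩
  have hS2 : 2 ≤ S.card := by
    rcases hSeven with ⟨m, hm⟩; omega
  obtain ⟨k, hkS, hkj⟩ := Finset.exists_mem_ne (s := S) (by omega : 1 < S.card) j
  have hpairS : ({j, k} : Finset (Fin n)) ⊆ S := by
    intro x hx; simp at hx; rcases hx with h | h <;> simp [h, hjS, hkS]
  have hsumS : |α j| + |α k| ≤ ∑ i ∈ S, |α i| := by
    have := Finset.sum_le_sum_of_subset_of_nonneg hpairS
      (fun i _ _ => abs_nonneg (α i))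
    rwa [Finset.sum_pair (fun h => hkj h.symm)] at this
  constructor
  · rw [Finset.card_insert_of_notMem, Finset.card_image_of_injOn,
      Finset.card_erase_of_mem hi₀R, hcard]
    · omega
    · intro a ha b hb hab
      simp only at hab
      have ha' := Finset.ne_of_mem_erase ha
      have hb' := Finset.ne_of_mem_erase hb
      have : a ∈ ({i₀, b} : Finset (Fin n)) := by rw [← hab]; simp
      simp at this
      rcases this with h | h
      · exact absurd h ha'
      · exact h
    · simp only [Finset.mem_image, not_exists]
      rintro r ⟨hr, h⟩
      exact Finset.insert_ne_empty _ _ h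
  · intro T hT
    simp only [Finset.mem_insert, Finset.mem_image] at hT
    rcases hT with rfl | ⟨r, hr, rfl⟩
    · refine ⟨by simp, ?_, by positivity⟩
      rintro rfl; exact hjR (absurd hjS (by simp))
    · have hri₀ : r ≠ i₀ := Finset.ne_of_mem_erase hr
      have hrR : r ∈ R := Finset.mem_of_mem_erase hr
      refine ⟨?_, ?_, ?_⟩
      · rw [Finset.card_pair (Ne.symm hri₀)]; exact ⟨1, rfl⟩
      · intro h
        have : j ∈ ({i₀, r} : Finset (Fin n)) := h ▸ hjS
        simp at this
        rcases this with rfl | rfl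
        · exact hjR hi₀R
        · exact hjR hrR
      · rw [Finset.sum_pair (Ne.symm hri₀)]
        have h1 : |α i₀| ≤ |α k| := h₀ k
        have h2 : |α r| ≤ |α j| := hmin r hrR j hjR
        linarith
end
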